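/- arXiv:2509.25799 — 2 statements merged into one kernel-verified Lean document; each statement's English description precedes it below -/
import Mathlib

section
/- Let f : ℝ^n → ℝ^n be continuous and satisfy 2⟨u₁ - u₂, f(u₁) - f(u₂)⟩ ≤ n₀|u₁ - u₂|² for all u₁, u₂, with n₀Δ < 2 for Δ > 0. Then G(u) = u - Δ f(u) is a bijection from ℝ^n onto ℝ^n. -/
/-!
A continuous map `G` with `c ‖u - v‖² ≤ ⟪u - v, G u - G v⟫`, `c > 0`, on a finite-dimensional
space is injective, and surjective by induction on the dimension: split `E = ℝ e ⊕ e^⟂`. For each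
height `t`, the compression `x ↦ P (G (x + t e))` of `G` to the hyperplane `e^⟂` (with `P` the
orthogonal projection) is again strongly monotone, so it hits `P b` at a unique `x t`, which
depends continuously on `t`. Along the curve `u t = x t + t e` the `e^⟂`-component of `G` is
frozen, so `t ↦ ⟪e, G (u t)⟫` is a strongly monotone real function and the intermediate value
theorem finds `t` with `G (u t) = b`. The map `u ↦ u - Δ f u` is strongly monotone with
`c = 1 - n₀ Δ / 2`.
-/

open scoped RealInnerProductSpace
open Filter Topology

variable {E : Type*} [NormedAddCommGroup E] [InnerProductSpace ℝ E]

def StronglyMonotone (c : ℝ) (G : E → E) : Prop :=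
  ∀ u v, c * ‖u - v‖ ^ 2 ≤ ⟪u - v, G u - G v⟫

namespace StronglyMonotone

variable {c : ℝ} {G : E → E}

theorem mul_norm_sub_le (hG : StronglyMonotone c G) (u v : E) :
    c * ‖u - v‖ ≤ ‖G u - G v‖ := by
  rcases (norm_nonneg (u - v)).eq_or_lt with h | h
  · rw [← h, mul_zero]
    exact norm_nonneg _
  · refine le_of_mul_le_mul_right ?_ h
    calc c * ‖u - v‖ * ‖u - v‖ = c * ‖u - v‖ ^ 2 := by ring
      _ ≤ ⟪u - v, G u - G v⟫ := hG u v
      _ ≤ ‖u - v‖ * ‖G u - G v‖ := real_inner_le_norm _ _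
      _ = ‖G u - G v‖ * ‖u - v‖ := mul_comm _ _

theorem injective (hG : StronglyMonotone c G) (hc : 0 < c) : Function.Injective G := by
  intro u v huv
  have := hG.mul_norm_sub_le u v
  rw [huv, sub_self, norm_zero] at this
  exact sub_eq_zero.mp (norm_le_zero_iff.mp (nonpos_of_mul_nonpos_right this hc))

theorem orthogonalProjectionOnto_comp (hG : StronglyMonotone c G) (F : Submodule ℝ E)
    [F.HasOrthogonalProjection] (a : E) :
    StronglyMonotone c fun x : F => F.orthogonalProjectionOnto (G (x + a)) := by
  intro x y
  have := hG (x + a) (y + a)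
  rw [add_sub_add_right_eq_sub] at this
  rwa [← map_sub, Submodule.inner_orthogonalProjectionOnto_eq_of_mem_left]

end StronglyMonotone

theorem continuous_of_stronglyMonotone_of_apply_eq {T : Type*} [TopologicalSpace T] {c : ℝ}
    (hc : 0 < c) {G : T → E → E} (hG : ∀ t, StronglyMonotone c (G t))
    (hGc : ∀ x, Continuous fun t => G t x) {x : T → E} {b : E} (hx : ∀ t, G t (x t) = b) :
    Continuous x := by
  refine continuous_iff_continuousAt.mpr fun s => tendsto_iff_norm_sub_tendsto_zero.mpr ?_
  have hlim : Tendsto (fun t => c⁻¹ * ‖G t (x s) - b‖) (𝓝 s) (𝓝 0) := by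
    simpa [hx s] using
      (((hGc (x s)).sub (continuous_const (y := b))).norm.const_mul c⁻¹).tendsto s
  refine squeeze_zero (fun _ => norm_nonneg _) (fun t => ?_) hlim
  have := (hG t).mul_norm_sub_le (x t) (x s)
  rwa [le_inv_mul_iff₀ hc, norm_sub_rev (G t (x s)), ← hx t]

theorem Real.surjective_of_stronglyMonotone {c : ℝ} (hc : 0 < c) {g : ℝ → ℝ}
    (hgc : Continuous g)
    (hg : ∀ t s, c * (t - s) ^ 2 ≤ (t - s) * (g t - g s)) : Function.Surjective g := by
  refine hgc.surjective ?_ ?_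
  · refine tendsto_atTop_mono' _ ?_
      (tendsto_atTop_add_const_left _ (g 0) (tendsto_id.const_mul_atTop hc))
    filter_upwards [eventually_gt_atTop 0] with t ht
    show g 0 + c * t ≤ g t
    nlinarith [hg t 0]
  · refine tendsto_atBot_mono' _ ?_
      (tendsto_atBot_add_const_left _ (g 0) (tendsto_id.const_mul_atBot hc))
    filter_upwards [eventually_lt_atBot 0] with t ht
    show g t ≤ g 0 + c * t
    nlinarith [hg t 0]

theorem inner_eq_mul_of_mem_span_singleton {e w : E} (he : ‖e‖ = 1) (hw : w ∈ ℝ ∙ e) (d : E) :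
    ⟪d, w⟫ = ⟪d, e⟫ * ⟪e, w⟫ := by
  obtain ⟨a, rfl⟩ := Submodule.mem_span_singleton.mp hw
  simp [real_inner_smul_right, he, mul_comm]

theorem eq_of_inner_eq_of_orthogonalProjectionOnto_eq {e w w' : E} (he : ‖e‖ = 1)
    (h₁ : ⟪e, w⟫ = ⟪e, w'⟫)
    (h₂ : (ℝ ∙ e)ᗮ.orthogonalProjectionOnto w = (ℝ ∙ e)ᗮ.orthogonalProjectionOnto w') :
    w = w' := by
  rw [← (ℝ ∙ e).starProjection_add_starProjection_orthogonal w,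
    ← (ℝ ∙ e).starProjection_add_starProjection_orthogonal w',
    Submodule.starProjection_unit_singleton ℝ he, Submodule.starProjection_unit_singleton ℝ he,
    Submodule.starProjection_apply, Submodule.starProjection_apply, h₁, h₂]

namespace StronglyMonotone

variable {c : ℝ} {G : E → E}

theorem surjective_of_orthogonal_span_singleton {e : E} (he : ‖e‖ = 1)
    (hF : ∀ G' : (ℝ ∙ e)ᗮ → (ℝ ∙ e)ᗮ, Continuous G' → StronglyMonotone c G' →
      Function.Surjective G')
    (hc : 0 < c) (hG : StronglyMonotone c G) (hGc : Continuous G) : Function.Surjective G := by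
  intro b
  have hGt (t : ℝ) : StronglyMonotone c
      fun x : (ℝ ∙ e)ᗮ => (ℝ ∙ e)ᗮ.orthogonalProjectionOnto (G (x + t • e)) :=
    hG.orthogonalProjectionOnto_comp _ (t • e)
  have hsol (t : ℝ) : ∃ x : (ℝ ∙ e)ᗮ, (ℝ ∙ e)ᗮ.orthogonalProjectionOnto (G (x + t • e)) =
      (ℝ ∙ e)ᗮ.orthogonalProjectionOnto b :=
    hF _ (by fun_prop) (hGt t) _
  choose x hx using hsol
  have hxc : Continuous x :=
    continuous_of_stronglyMonotone_of_apply_eq hc hGt (fun y => by fun_prop) hx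
  set u : ℝ → E := fun t => x t + t • e
  have hmono (t s : ℝ) :
      c * (t - s) ^ 2 ≤ (t - s) * (⟪e, G (u t)⟫ - ⟪e, G (u s)⟫) := by
    have hGd : G (u t) - G (u s) ∈ ℝ ∙ e := by
      rw [← Submodule.orthogonal_orthogonal (ℝ ∙ e),
        ← Submodule.orthogonalProjectionOnto_eq_zero_iff, map_sub, hx t, hx s, sub_self]
    have hud : ⟪e, u t - u s⟫ = t - s := by
      have hx0 : ⟪e, (x t : E) - x s⟫ = 0 := Submodule.inner_right_of_mem_orthogonal
        (Submodule.mem_span_singleton_self e) (sub_mem (x t).2 (x s).2)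
      rw [add_sub_add_comm, ← sub_smul, inner_add_right, hx0, real_inner_smul_right,
        real_inner_self_eq_norm_sq, he]
      ring
    calc c * (t - s) ^ 2 = c * ⟪e, u t - u s⟫ ^ 2 := by rw [hud]
      _ ≤ c * ‖u t - u s‖ ^ 2 := by
        refine mul_le_mul_of_nonneg_left ?_ hc.le
        simpa [he] using
          pow_le_pow_left₀ (abs_nonneg _) (abs_real_inner_le_norm e (u t - u s)) 2
      _ ≤ ⟪u t - u s, G (u t) - G (u s)⟫ := hG _ _
      _ = (t - s) * (⟪e, G (u t)⟫ - ⟪e, G (u s)⟫) := by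
        rw [inner_eq_mul_of_mem_span_singleton he hGd, real_inner_comm, hud, inner_sub_right]
  obtain ⟨t, ht⟩ := Real.surjective_of_stronglyMonotone hc (by fun_prop) hmono ⟪e, b⟫
  exact ⟨u t, eq_of_inner_eq_of_orthogonalProjectionOnto_eq he ht (hx t)⟩

theorem surjective [FiniteDimensional ℝ E] (hc : 0 < c) (hG : StronglyMonotone c G)
    (hGc : Continuous G) : Function.Surjective G := by
  induction hn : Module.finrank ℝ E generalizing E with
  | zero =>
    have := Module.finrank_zero_iff.mp hn
    exact fun b => ⟨b, Subsingleton.elim _ _⟩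
  | succ n ih =>
    have : Nontrivial E := Module.nontrivial_of_finrank_pos (R := ℝ) (by omega)
    have : Fact (Module.finrank ℝ E = n + 1) := ⟨hn⟩
    obtain ⟨e, he⟩ := exists_norm_eq E zero_le_one
    have he0 : e ≠ 0 := norm_ne_zero_iff.mp (by simp [he])
    exact hG.surjective_of_orthogonal_span_singleton he
      (fun G' hG'c hG' => ih hG' hG'c (Submodule.finrank_orthogonal_span_singleton he0)) hc hGc

end StronglyMonotone

theorem stronglyMonotone_sub_smul {f : E → E} {n₀ Δ : ℝ} (hΔ : 0 ≤ Δ)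
    (hf : ∀ u v, 2 * ⟪u - v, f u - f v⟫ ≤ n₀ * ‖u - v‖ ^ 2) :
    StronglyMonotone (1 - n₀ * Δ / 2) fun u => u - Δ • f u := by
  intro u v
  have := mul_le_mul_of_nonneg_left (hf u v) hΔ
  rw [sub_sub_sub_comm, ← smul_sub, inner_sub_right, real_inner_smul_right,
    real_inner_self_eq_norm_sq]
  nlinarith

theorem stmt4 (n : ℕ) (f : EuclideanSpace ℝ (Fin n) → EuclideanSpace ℝ (Fin n))
    (hcont : Continuous f)
    (n₀ Δ : ℝ) (hΔ : 0 < Δ) (h2 : n₀ * Δ < 2)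
    (hf : ∀ u₁ u₂, 2 * (inner ℝ (u₁ - u₂) (f u₁ - f u₂) : ℝ) ≤ n₀ * ‖u₁ - u₂‖ ^ 2) :
    Function.Bijective (fun u : EuclideanSpace ℝ (Fin n) => u - Δ • f u) := by
  have hc : 0 < 1 - n₀ * Δ / 2 := by linarith
  have hG := stronglyMonotone_sub_smul hΔ.le hf
  exact ⟨hG.injective hc, hG.surjective hc (by fun_prop)⟩
end

section
/- Let n_j ∈ ℝ for j in a finite set S, n_M = max_j |n_j|, μ_j > 0 with Σ μ_j = 1, and suppose Σ_j μ_j (n_j + 1)/(1 - (n_j + 1)/(n_M + 2)) = -λ₁ with λ₁ > 0. Then for any Δ ∈ (0, 1/(n_M + 2)), Σ_j μ_j log(1/(1 - (n_j + 1)Δ)) ≤ -λ₁Δ. -/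
/-! Termwise, `log (1 / (1 - a Δ)) ≤ a Δ / (1 - a Δ)` since `log x ≤ x - 1`, and the denominator
`1 - a Δ` only moves away from `1 - a / (nM + 2)` as `Δ` shrinks below `1 / (nM + 2)`, so
`log (1 / (1 - a Δ)) ≤ a / (1 - a / (nM + 2)) * Δ`. Averaging against `μ` gives `-λ₁ Δ`. -/

open Finset

namespace Real

theorem log_one_div_one_sub_mul_le {a s t : ℝ} (ht : 0 ≤ t) (hts : t ≤ s) (has : a * s < 1) :
    log (1 / (1 - a * t)) ≤ a / (1 - a * s) * t := by
  have hat : a * t < 1 := by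
    rcases le_or_gt a 0 with ha | ha <;> nlinarith
  have hpos : 0 < 1 - a * t := by linarith
  have hpos' : 0 < 1 - a * s := by linarith
  calc log (1 / (1 - a * t)) ≤ 1 / (1 - a * t) - 1 := log_le_sub_one_of_pos (by positivity)
    _ = a * t / (1 - a * t) := by field_simp; ring
    _ ≤ a * t / (1 - a * s) := by
        rw [div_le_div_iff₀ hpos hpos']
        nlinarith [mul_nonneg (mul_nonneg (mul_self_nonneg a) ht) (sub_nonneg.2 hts)]
    _ = a / (1 - a * s) * t := by ring

end Real

theorem add_one_div_add_two_lt_one_of_abs_le {x m : ℝ} (hx : |x| ≤ m) : (x + 1) / (m + 2) < 1 := by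
  have hm : 0 < m + 2 := by linarith [abs_nonneg x]
  rw [div_lt_one hm]
  linarith [le_abs_self x]

theorem stmt7_general (S : Type*) [Fintype S] [Nonempty S] (n : S → ℝ) (nM : ℝ)
    (hnM : nM = Finset.univ.sup' Finset.univ_nonempty fun j => |n j|)
    (μ : S → ℝ) (hμ : ∀ j, 0 < μ j)
    (lam₁ : ℝ)
    (hid : ∑ j, μ j * ((n j + 1) / (1 - (n j + 1) / (nM + 2))) = -lam₁)
    (Δ : ℝ) (hΔ : 0 < Δ) (hΔ2 : Δ < 1 / (nM + 2)) :
    ∑ j, μ j * Real.log (1 / (1 - (n j + 1) * Δ)) ≤ -lam₁ * Δ := by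
  have hterm (j : S) : Real.log (1 / (1 - (n j + 1) * Δ)) ≤
      (n j + 1) / (1 - (n j + 1) / (nM + 2)) * Δ := by
    have hj : |n j| ≤ nM := hnM ▸ le_sup' (fun j => |n j|) (mem_univ j)
    have := Real.log_one_div_one_sub_mul_le hΔ.le hΔ2.le
      (by rw [mul_one_div]; exact add_one_div_add_two_lt_one_of_abs_le hj)
    rwa [mul_one_div] at this
  calc ∑ j, μ j * Real.log (1 / (1 - (n j + 1) * Δ))
      ≤ ∑ j, μ j * ((n j + 1) / (1 - (n j + 1) / (nM + 2)) * Δ) :=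
        sum_le_sum fun j _ => mul_le_mul_of_nonneg_left (hterm j) (hμ j).le
    _ = -lam₁ * Δ := by simp_rw [← mul_assoc, ← sum_mul, hid]

theorem stmt7 (S : Type*) [Fintype S] [Nonempty S] (n : S → ℝ) (nM : ℝ)
    (hnM : nM = Finset.univ.sup' Finset.univ_nonempty fun j => |n j|)
    (μ : S → ℝ) (hμ : ∀ j, 0 < μ j) (hsum : ∑ j, μ j = 1)
    (lam₁ : ℝ) (hlam : 0 < lam₁)
    (hid : ∑ j, μ j * ((n j + 1) / (1 - (n j + 1) / (nM + 2))) = -lam₁)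
    (Δ : ℝ) (hΔ : 0 < Δ) (hΔ2 : Δ < 1 / (nM + 2)) :
    ∑ j, μ j * Real.log (1 / (1 - (n j + 1) * Δ)) ≤ -lam₁ * Δ :=
  stmt7_general S n nM hnM μ hμ lam₁ hid Δ hΔ hΔ2
end
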